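/- arXiv:1901.06370 — 3 statements merged into one kernel-verified Lean document; each statement's English description precedes it below -/
import Mathlib

section
/- For every integer n ≥ 2, there exists a 2n×2n real matrix A with no real eigenvalues such that A - Aᵀ is singular, i.e., det(A - Aᵀ) = 0. -/
/-! The witness is `C ⊗ J`, with `J` the rotation by a right angle and `C = 1 + 2 Eᵢⱼ` (`i ≠ j`).
From `J² = -1` we get `(C ⊗ J)² + 1 = (1 - C²) ⊗ 1`, whose square vanishes because `Eᵢⱼ² = 0`;
so `C ⊗ J` is annihilated by `(X² + 1)²`, which has no real root, and has no real eigenvalue.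
From `Jᵀ = -J` we get `C ⊗ J - (C ⊗ J)ᵀ = (C + Cᵀ) ⊗ J`, and rows `i` and `j` of `C + Cᵀ`
coincide. -/

open Matrix Polynomial Kronecker

section

variable {R : Type*} [CommRing R] {m n : Type*}

theorem Matrix.kronecker_sub_transpose (C : Matrix n n R) {J : Matrix m m R} (hJ : Jᵀ = -J) :
    C ⊗ₖ J - (C ⊗ₖ J)ᵀ = (C + Cᵀ) ⊗ₖ J := by
  rw [← kroneckerMap_transpose, hJ]
  ext ⟨a, b⟩ ⟨c, d⟩
  simp only [add_apply, kroneckerMap_apply, neg_apply, sub_apply]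
  ring

variable [Fintype m] [DecidableEq m]

theorem Matrix.aeval_mulVec_of_mulVec_eq_smul (A : Matrix m m R) (p : R[X]) {μ : R} {v : m → R}
    (h : A *ᵥ v = μ • v) : aeval A p *ᵥ v = p.eval μ • v := by
  rw [← toLinAlgEquiv'_apply, ← aeval_algHom_apply]
  exact Module.End.aeval_apply_of_mem_apply_eq_smul (by rwa [toLinAlgEquiv'_apply])

theorem Matrix.not_exists_mulVec_eq_smul_of_aeval_eq_zero [IsDomain R] {A : Matrix m m R}
    {p : R[X]} (hA : aeval A p = 0) (hp : ∀ x, ¬ p.IsRoot x) :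
    ¬ ∃ (lam : R) (v : m → R), v ≠ 0 ∧ A *ᵥ v = lam • v := by
  rintro ⟨lam, v, hv, h⟩
  have := A.aeval_mulVec_of_mulVec_eq_smul p h
  rw [hA, zero_mulVec, eq_comm, smul_eq_zero] at this
  exact hp lam (this.resolve_right hv)

variable [Fintype n] [DecidableEq n]

theorem Matrix.kronecker_mul_self_add_one (C : Matrix n n R) {J : Matrix m m R}
    (hJ : J * J = -1) : C ⊗ₖ J * C ⊗ₖ J + 1 = (1 - C * C) ⊗ₖ 1 := by
  rw [← mul_kronecker_mul, hJ, ← one_kronecker_one]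
  ext ⟨a, b⟩ ⟨c, d⟩
  simp only [add_apply, kroneckerMap_apply, neg_apply, sub_apply]
  ring

theorem Matrix.det_one_add_single_add_transpose {i j : n} (hij : i ≠ j) :
    ((1 + single i j 2 : Matrix n n R) + (1 + single i j 2)ᵀ).det = 0 := by
  refine det_zero_of_row_eq hij (funext fun k => ?_)
  by_cases hi : k = i <;> by_cases hj : k = j <;> simp_all [one_apply, single_apply, eq_comm]
  all_goals norm_num

end

theorem one_sub_one_add_mul_self_sq {α : Type*} [Ring α] {N : α} (hN : N * N = 0) :
    (1 - (1 + N) * (1 + N)) ^ 2 = 0 := by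
  have : 1 - (1 + N) * (1 + N) = -(N + N) := by
    simp only [mul_add, add_mul, hN]; noncomm_ring
  rw [this, neg_sq, sq]
  simp only [add_mul, mul_add, hN, add_zero]

/-- For every `n ≥ 2` there is a `2n × 2n` real matrix `A` with no real
eigenvalues such that `A - Aᵀ` is singular. -/
theorem exists_no_real_eigenvalues_sub_transpose_singular (n : ℕ) (hn : 2 ≤ n) :
    ∃ A : Matrix (Fin (2 * n)) (Fin (2 * n)) ℝ,
      (¬ ∃ (lam : ℝ) (v : Fin (2 * n) → ℝ), v ≠ 0 ∧ A.mulVec v = lam • v) ∧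
      (A - Aᵀ).det = 0 := by
  obtain ⟨i, j, hij⟩ : ∃ i j : Fin n, i ≠ j := ⟨⟨0, by omega⟩, ⟨1, by omega⟩, by simp⟩
  set C : Matrix (Fin n) (Fin n) ℝ := 1 + single i j 2
  set J : Matrix (Fin 2) (Fin 2) ℝ := !![0, -1; 1, 0]
  have hJ : J * J = -1 := by ext a b; fin_cases a <;> fin_cases b <;> simp [J]
  have hJt : Jᵀ = -J := by ext a b; fin_cases a <;> fin_cases b <;> simp [J]
  let e : Fin n × Fin 2 ≃ Fin (2 * n) := finProdFinEquiv.trans (finCongr (mul_comm n 2))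
  refine ⟨reindex e e (C ⊗ₖ J), ?_, ?_⟩
  · refine not_exists_mulVec_eq_smul_of_aeval_eq_zero (p := (X ^ 2 + 1) ^ 2) ?_
      fun x => by rw [IsRoot.def, eval_pow, eval_add, eval_pow, eval_X, eval_one]; positivity
    have hA : aeval (C ⊗ₖ J) ((X ^ 2 + 1) ^ 2 : ℝ[X]) = 0 := by
      rw [map_pow, map_add, aeval_X_pow, map_one, sq (C ⊗ₖ J), kronecker_mul_self_add_one C hJ,
        sq, ← mul_kronecker_mul, one_mul, ← sq,
        one_sub_one_add_mul_self_sq (single_mul_single_of_ne 2 i j i hij.symm 2), zero_kronecker]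
    rw [← coe_reindexAlgEquiv ℝ ℝ, aeval_algHom_apply, hA, map_zero]
  · rw [transpose_reindex, ← coe_reindexAlgEquiv ℝ ℝ, ← map_sub, coe_reindexAlgEquiv,
      det_reindex_self, kronecker_sub_transpose C hJt, det_kronecker,
      det_one_add_single_add_transpose hij]
    simp
end

section
/- Fix an integer n ≥ 2 and let A be the 2n×2n real matrix defined entrywise (indices from 1 to 2n) by: A_{2k-1,2k} = 1/2 and A_{2k,2k-1} = -1/2 for each k = 1, …, n; A_{1,2n-1} = 1 and A_{2,2n} = 1; and all other entries equal to 0. (Thus A has n copies of the 2×2 block [[0,1/2],[-1/2,0]] down the diagonal and a single 2×2 identity block in the upper right corner.) Then the characteristic polynomial of A equals (X² + 1/4)ⁿ; in particular, A has no real eigenvalues. -/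
/-!
Grouping the indices into the pairs `{2k, 2k+1}` makes `A` block upper triangular: the only
off-diagonal block is the identity in the upper right corner, which for `n ≥ 2` lies strictly
above the diagonal blocks. Every diagonal block is `[[0, 1/2], [-1/2, 0]]`, with characteristic
polynomial `X² + 1/4`, so `charpoly A = (X² + 1/4)ⁿ`. A real eigenvalue would be a real root of it, but
`λ² + 1/4 > 0`.
-/

open Matrix Polynomial

/-- The `2n × 2n` real matrix with `n` copies of the 2×2 block
`[[0, 1/2], [-1/2, 0]]` down the diagonal and a single 2×2 identity block in
the upper right corner.  In 1-based indexing: `A_{2k-1,2k} = 1/2`,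
`A_{2k,2k-1} = -1/2`, `A_{1,2n-1} = 1`, `A_{2,2n} = 1`, all other entries `0`.
Here indices are 0-based, so e.g. `A_{1,2n-1} = 1` becomes `A 0 (2n-2) = 1`. -/
noncomputable def blockMatrix (n : ℕ) : Matrix (Fin (2 * n)) (Fin (2 * n)) ℝ :=
  Matrix.of fun i j =>
    if (i : ℕ) % 2 = 0 ∧ (j : ℕ) = (i : ℕ) + 1 then 1/2
    else if (i : ℕ) % 2 = 1 ∧ (j : ℕ) + 1 = (i : ℕ) then -1/2
    else if (i : ℕ) = 0 ∧ (j : ℕ) = 2 * n - 2 then 1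
    else if (i : ℕ) = 1 ∧ (j : ℕ) = 2 * n - 1 then 1
    else 0

namespace Matrix

variable {ι R : Type*} [Fintype ι] [DecidableEq ι] [CommRing R]

theorem isRoot_charpoly_of_mulVec_eq_smul [IsDomain R] {A : Matrix ι ι R} {μ : R} {v : ι → R}
    (hv : v ≠ 0) (h : A *ᵥ v = μ • v) : A.charpoly.IsRoot μ := by
  rw [← charpoly_toLin', ← Module.End.hasEigenvalue_iff_isRoot_charpoly]
  exact Module.End.hasEigenvalue_of_hasEigenvector ⟨Module.End.mem_eigenspace_iff.mpr h, hv⟩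

theorem charpoly_skew_fin_two [Nontrivial R] (a : R) :
    (!![0, a; -a, 0]).charpoly = X ^ 2 + C (a ^ 2) := by
  simp [charpoly_fin_two, trace_fin_two, det_fin_two, sq]

end Matrix

theorem Fin.image_div_two_univ (n : ℕ) :
    Finset.image (fun i : Fin (2 * n) => (i : ℕ) / 2) Finset.univ = Finset.range n := by
  ext k
  simp only [Finset.mem_image, Finset.mem_univ, true_and, Finset.mem_range]
  constructor
  · rintro ⟨i, rfl⟩
    omega
  · intro hk
    exact ⟨⟨2 * k, by omega⟩, by simp⟩

def finTwoEquivDivTwo {n k : ℕ} (hk : k < n) : Fin 2 ≃ {i : Fin (2 * n) // (i : ℕ) / 2 = k} where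
  toFun m := ⟨⟨2 * k + m, by omega⟩, by simp only; omega⟩
  invFun i := ⟨(i : ℕ) % 2, Nat.mod_lt _ two_pos⟩
  left_inv m := by ext; simp only; omega
  right_inv := by
    rintro ⟨⟨i, hi⟩, hik⟩
    ext
    simp only at hik ⊢
    omega

theorem blockMatrix_blockTriangular (n : ℕ) :
    (blockMatrix n).BlockTriangular fun i => (i : ℕ) / 2 := by
  intro i j hij
  simp only at hij
  simp only [blockMatrix, of_apply]
  split_ifs <;> first | rfl | omega

theorem reindex_toSquareBlock_blockMatrix {n k : ℕ} (hn : 2 ≤ n) (hk : k < n) :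
    reindex (finTwoEquivDivTwo hk).symm (finTwoEquivDivTwo hk).symm
        ((blockMatrix n).toSquareBlock (fun i => (i : ℕ) / 2) k) =
      !![0, 1/2; -(1/2), 0] := by
  ext a b
  fin_cases a <;> fin_cases b <;>
    simp [finTwoEquivDivTwo, toSquareBlock_def, blockMatrix, neg_div] <;> omega

theorem charpoly_toSquareBlock_blockMatrix {n k : ℕ} (hn : 2 ≤ n) (hk : k < n) :
    ((blockMatrix n).toSquareBlock (fun i => (i : ℕ) / 2) k).charpoly = X ^ 2 + C (1/4 : ℝ) := by
  rw [← charpoly_reindex (finTwoEquivDivTwo hk).symm, reindex_toSquareBlock_blockMatrix hn hk,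
    charpoly_skew_fin_two]
  norm_num

/-- For `n ≥ 2`, the characteristic polynomial of the matrix above is
`(X² + 1/4)ⁿ`; in particular, it has no real eigenvalues. -/
theorem charpoly_blockMatrix (n : ℕ) (hn : 2 ≤ n) :
    (blockMatrix n).charpoly = (X ^ 2 + C (1/4 : ℝ)) ^ n ∧
      ¬ ∃ (lam : ℝ) (v : Fin (2 * n) → ℝ), v ≠ 0 ∧
        (blockMatrix n).mulVec v = lam • v := by
  have hcp : (blockMatrix n).charpoly = (X ^ 2 + C (1/4 : ℝ)) ^ n := by
    rw [(blockMatrix_blockTriangular n).charpoly, Fin.image_div_two_univ,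
      Finset.prod_congr rfl fun k hk =>
        charpoly_toSquareBlock_blockMatrix hn (Finset.mem_range.mp hk),
      Finset.prod_const, Finset.card_range]
  refine ⟨hcp, ?_⟩
  rintro ⟨lam, v, hv, hlam⟩
  have hroot := isRoot_charpoly_of_mulVec_eq_smul hv hlam
  rw [hcp, IsRoot, eval_pow, eval_add, eval_pow, eval_X, eval_C] at hroot
  exact (pow_pos (by positivity) n).ne' hroot
end

section
/- Let n ≥ 1 and let B = (b_{ij}) be a 2n×2n real skew-symmetric matrix (Bᵀ = -B). Let e₁, …, e_{2n} be the standard basis of ℝ^{2n} and consider the element ω = Σ_{i<j} b_{ij} · (e_i ∧ e_j) of the exterior algebra of ℝ^{2n}. Then the n-th power of ω in the exterior algebra satisfies ωⁿ = n! · Pf(B) · (e₁ ∧ e₂ ∧ ⋯ ∧ e_{2n}), where Pf(B) is the real number defined explicitly by Pf(B) = (1/(2ⁿ·n!)) · Σ_{σ ∈ S_{2n}} sign(σ) · b_{σ(1),σ(2)} · b_{σ(3),σ(4)} ⋯ b_{σ(2n-1),σ(2n)}, the sum running over all permutations σ of {1, …, 2n}. -/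
/-!
Skew-symmetry of `B` and `ι x * ι y = -(ι y * ι x)` give `ω = ½ ∑_{i,j} b_{ij} e_i ∧ e_j`.
Expanding the `n`-th power in the (noncommutative) exterior algebra and grouping the `2n` factors
into consecutive pairs, `ωⁿ = 2⁻ⁿ ∑_h (∏_k b_{h(2k),h(2k+1)}) e_{h(0)} ∧ ⋯ ∧ e_{h(2n-1)}`, the sum
running over all maps `h` from the index set to itself. Terms with `h` non-injective vanish, and
for a permutation `σ` the wedge product is `sign σ` times that of the `e_i` in increasing order,
leaving `2⁻ⁿ ∑_σ sign σ ∏_k b_{σ(2k),σ(2k+1)} = n! Pf(B)`.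
-/

open Matrix ExteriorAlgebra

theorem List.prod_ofFn_two_mul {M : Type*} [Monoid M] {n : ℕ} (x : Fin (2 * n) → M) :
    (List.ofFn x).prod = (List.ofFn fun k : Fin n =>
      x ⟨2 * k, by omega⟩ * x ⟨2 * k + 1, by omega⟩).prod := by
  rw [List.ofFn_mul', List.prod_flatten, List.map_ofFn]
  simp [Function.comp_def]

theorem List.prod_ofFn_smul {R A : Type*} [CommSemiring R] [Semiring A] [Module R A]
    [IsScalarTower R A A] [SMulCommClass R A A] {m : ℕ} (c : Fin m → R) (a : Fin m → A) :
    (List.ofFn fun k => c k • a k).prod = (∏ k, c k) • (List.ofFn a).prod := by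
  induction m with
  | zero => simp
  | succ m ih => simp [List.ofFn_succ, ih, Fin.prod_univ_succ, smul_mul_smul_comm]

theorem pow_sum_eq_sum_prod_ofFn {ι A : Type*} [Fintype ι] [Semiring A] (f : ι → A) (m : ℕ) :
    (∑ i, f i) ^ m = ∑ g : Fin m → ι, (List.ofFn fun k => f (g k)).prod := by
  induction m with
  | zero => simp
  | succ m ih =>
    rw [pow_succ', ih, Finset.sum_mul_sum, ← Fintype.sum_prod_type',
      ← (Fin.consEquiv fun _ => ι).sum_comp]
    simp [Fin.consEquiv, List.ofFn_succ]

def finTwoMulArrowEquivArrowProd (n : ℕ) (α : Type*) : (Fin (2 * n) → α) ≃ (Fin n → α × α) where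
  toFun h k := (h ⟨2 * k, by omega⟩, h ⟨2 * k + 1, by omega⟩)
  invFun g j :=
    if (j : ℕ) % 2 = 0 then (g ⟨j / 2, by omega⟩).1 else (g ⟨j / 2, by omega⟩).2
  left_inv h := funext fun j => by dsimp only; split_ifs <;> congr 1 <;> ext <;> simp <;> omega
  right_inv g := funext fun k => by
    have : (2 * (k : ℕ) + 1) / 2 = k := by omega
    simp [this]

theorem Fintype.sum_fun_eq_sum_perm {α M : Type*} [Fintype α] [DecidableEq α] [AddCommMonoid M]
    (F : (α → α) → M) (hF : ∀ g, ¬Function.Injective g → F g = 0) :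
    ∑ g : α → α, F g = ∑ σ : Equiv.Perm α, F σ := by
  refine (Finset.sum_bij_ne_zero (f := fun σ : Equiv.Perm α => F σ) (fun σ _ _ => ⇑σ) (by simp)
    (fun _ _ _ _ _ _ h => Equiv.ext (congrFun h)) (fun g _ hFg => ?_) (fun _ _ _ => rfl)).symm
  have hg : Function.Bijective g := Finite.injective_iff_bijective.mp (not_not.1 (mt (hF g) hFg))
  exact ⟨Equiv.ofBijective g hg, Finset.mem_univ _, hFg, rfl⟩

theorem AlternatingMap.sum_smul_map_comp {R M N ι : Type*} [Ring R] [AddCommMonoid M] [Module R M]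
    [AddCommGroup N] [Module R N] [Fintype ι] [DecidableEq ι] (φ : M [⋀^ι]→ₗ[R] N) (v : ι → M)
    (c : (ι → ι) → R) :
    ∑ h : ι → ι, c h • φ (v ∘ h) =
      (∑ σ : Equiv.Perm ι, ((Equiv.Perm.sign σ : ℤ) : R) * c σ) • φ v := by
  rw [Fintype.sum_fun_eq_sum_perm _ fun h hh => by
      rw [φ.map_eq_zero_of_not_injective _ (mt Function.Injective.of_comp hh), smul_zero],
    Finset.sum_smul]
  refine Fintype.sum_congr _ _ fun σ => ?_
  rw [φ.map_perm, Units.smul_def, ← Int.cast_smul_eq_zsmul R, smul_smul, Int.cast_comm]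

theorem pow_sum_sum_smul_mul {R A ι : Type*} [CommSemiring R] [Semiring A] [Module R A]
    [IsScalarTower R A A] [SMulCommClass R A A] [Fintype ι] (f : ι → ι → R) (x : ι → A) (m : ℕ) :
    (∑ i, ∑ j, f i j • (x i * x j)) ^ m =
      ∑ h : Fin (2 * m) → ι, (∏ k : Fin m,
        f (h ⟨2 * k, by omega⟩) (h ⟨2 * k + 1, by omega⟩)) •
          (List.ofFn (x ∘ h)).prod := by
  rw [← Fintype.sum_prod_type', pow_sum_eq_sum_prod_ofFn,
    ← (finTwoMulArrowEquivArrowProd m ι).sum_comp]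
  refine Fintype.sum_congr _ _ fun h => ?_
  rw [List.prod_ofFn_smul, List.prod_ofFn_two_mul]
  rfl

theorem sum_sum_eq_two_nsmul_sum_sum_ite_lt {ι M : Type*} [Fintype ι] [LinearOrder ι]
    [AddCommMonoid M] (f : ι → ι → M) (hf : ∀ i j, f j i = f i j) (hdiag : ∀ i, f i i = 0) :
    ∑ i, ∑ j, f i j = 2 • ∑ i, ∑ j, if i < j then f i j else 0 := by
  have hsplit : ∀ i j, f i j = (if i < j then f i j else 0) + (if j < i then f j i else 0) := by
    intro i j
    rcases lt_trichotomy i j with h | rfl | h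
    · simp [h, h.not_gt]
    · simp [hdiag]
    · simp [h, h.not_gt, hf]
  rw [Fintype.sum_congr _ _ fun i => Fintype.sum_congr _ _ fun j => hsplit i j]
  simp only [Finset.sum_add_distrib, two_nsmul]
  rw [Finset.sum_comm (f := fun i j => if j < i then f j i else 0)]

/-- For a `2n × 2n` real skew-symmetric matrix `B`, the bivector
`ω = Σ_{i<j} b_{ij} e_i ∧ e_j` in the exterior algebra of `ℝ^{2n}` satisfies
`ωⁿ = n! · Pf(B) · e₁ ∧ ⋯ ∧ e_{2n}`, where
`Pf(B) = (1/(2ⁿ n!)) Σ_σ sign(σ) b_{σ(1)σ(2)} ⋯ b_{σ(2n-1)σ(2n)}`. -/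
theorem bivector_pow_eq_pfaffian_smul (n : ℕ)
    (B : Matrix (Fin (2 * n)) (Fin (2 * n)) ℝ) (hB : Bᵀ = -B) :
    let e : Fin (2 * n) → (Fin (2 * n) → ℝ) := fun i => Pi.single i 1
    let ιR := ExteriorAlgebra.ι ℝ (M := Fin (2 * n) → ℝ)
    let ω : ExteriorAlgebra ℝ (Fin (2 * n) → ℝ) :=
      ∑ i : Fin (2 * n), ∑ j : Fin (2 * n),
        if i < j then B i j • (ιR (e i) * ιR (e j)) else 0
    let Pf : ℝ :=
      (1 / (2 ^ n * (n.factorial : ℝ))) *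
        ∑ σ : Equiv.Perm (Fin (2 * n)),
          ((Equiv.Perm.sign σ : ℤ) : ℝ) *
            ∏ k : Fin n,
              B (σ ⟨2 * (k : ℕ), by have := k.2; omega⟩)
                (σ ⟨2 * (k : ℕ) + 1, by have := k.2; omega⟩)
    ω ^ n = ((n.factorial : ℝ) * Pf) •
      ((List.finRange (2 * n)).map fun i => ιR (e i)).prod := by
  intro e ιR ω Pf
  have hω : ω = (2⁻¹ : ℝ) • ∑ i, ∑ j, B i j • (ιR (e i) * ιR (e j)) := by
    rw [sum_sum_eq_two_nsmul_sum_sum_ite_lt, two_nsmul, ← two_smul ℝ, inv_smul_smul₀ two_ne_zero]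
    · intro i j
      have hBji : B j i = -B i j := by simpa using congrFun (congrFun hB i) j
      have hι : ιR (e j) * ιR (e i) = -(ιR (e i) * ιR (e j)) :=
        (neg_eq_of_add_eq_zero_right (ι_add_mul_swap _ _)).symm
      rw [hBji, hι, neg_smul_neg]
    · simp [ιR]
  rw [hω, smul_pow, pow_sum_sum_smul_mul (f := B)]
  have hιMulti : ∀ h : Fin (2 * n) → Fin (2 * n),
      (List.ofFn ((fun i => ιR (e i)) ∘ h)).prod = ιMulti ℝ (2 * n) (e ∘ h) := fun h => rfl
  simp only [hιMulti]
  rw [AlternatingMap.sum_smul_map_comp, ιMulti_apply, List.ofFn_eq_map, smul_smul]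
  congr 1
  simp only [Pf, inv_pow]
  field_simp
end
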